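/- Let f : ℝⁿ → ℝ be a polynomial with Hermite expansion f(y) = Σ_α f̂(α) h_α(y), and let λ ∈ (0,1). Define g := U_{√(1-λ)} f, i.e., g(x) = Σ_α f̂(α)(1-λ)^{|α|/2} h_α(x). Then for all x, y ∈ ℝⁿ: f(√(1-λ)x + √λ y) = Σ_α (∂^α g(x)/√(α!)) · (λ/(1-λ))^{|α|/2} · h_α(y). -/

import Mathlib

open MeasureTheory ProbabilityTheory
open scoped Classical

/-- Normalized probabilist's Hermite polynomial `h_m = H_m / √(m!)` as a function. -/
noncomputable def herm (m : ℕ) (t : ℝ) : ℝ :=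
  ((Polynomial.hermite m).map (Int.castRingHom ℝ)).eval t / Real.sqrt (Nat.factorial m)

/-- The standard gaussian measure `N(0,1)^n` on `ℝ^n`. -/
noncomputable def gaussPi (n : ℕ) : Measure (Fin n → ℝ) := Measure.pi fun _ => gaussianReal 0 1

/-- Multivariate normalized Hermite polynomial `h_α(x) = ∏ i, h_{α i}(x i)`, as a function. -/
noncomputable def hermMvFn {n : ℕ} (α : Fin n →₀ ℕ) (x : Fin n → ℝ) : ℝ :=
  ∏ i, herm (α i) (x i)

/-- Normalized Hermite polynomial as a `Polynomial ℝ`. -/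
noncomputable def hermPoly (m : ℕ) : Polynomial ℝ :=
  Polynomial.C (Real.sqrt (Nat.factorial m))⁻¹ * (Polynomial.hermite m).map (Int.castRingHom ℝ)

/-- Multivariate normalized Hermite polynomial as an `MvPolynomial`. -/
noncomputable def hermMvPoly {n : ℕ} (α : Fin n →₀ ℕ) : MvPolynomial (Fin n) ℝ :=
  ∏ i, Polynomial.aeval (MvPolynomial.X i) (hermPoly (α i))

/-- Mixed partial derivative `∂^α` of a multivariate polynomial. -/
noncomputable def mpderiv {n : ℕ} (α : Fin n →₀ ℕ) (p : MvPolynomial (Fin n) ℝ) :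
    MvPolynomial (Fin n) ℝ :=
  ((List.ofFn fun i : Fin n =>
    (((MvPolynomial.pderiv i).toLinearMap : Module.End ℝ (MvPolynomial (Fin n) ℝ)) ^ (α i))).prod) p

/-- Iterated partial derivative along a sequence of coordinates. -/
noncomputable def pdSeq {n k : ℕ} (v : Fin k → Fin n) (p : MvPolynomial (Fin n) ℝ) :
    MvPolynomial (Fin n) ℝ :=
  ((List.ofFn fun j : Fin k =>
    ((MvPolynomial.pderiv (v j)).toLinearMap : Module.End ℝ (MvPolynomial (Fin n) ℝ))).prod) p

/-- `‖∇^k p(x)‖²`: squared Frobenius norm of the tensor of k-th order partials of `p` at `x`. -/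
noncomputable def gradNormSq {n : ℕ} (k : ℕ) (p : MvPolynomial (Fin n) ℝ) (x : Fin n → ℝ) : ℝ :=
  ∑ v : Fin k → Fin n, (MvPolynomial.eval x (pdSeq v p)) ^ 2

/-- `|α| = Σ_i α_i` for a multi-index. -/
def wt {n : ℕ} (α : Fin n →₀ ℕ) : ℕ := α.sum fun _ k => k

/-- `α! = Π_i (α_i)!` for a multi-index. -/
def fact {n : ℕ} (α : Fin n →₀ ℕ) : ℕ := α.prod fun _ k => Nat.factorial k

/-- `sign(t) = 1` if `t ≥ 0`, else `0`. -/
noncomputable def sgn (t : ℝ) : ℝ := if 0 ≤ t then 1 else 0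

/-- The gaussian restriction `p_{x,λ}(y) = p(√(1-λ)x + √λ y)` as a polynomial in `y`. -/
noncomputable def gaussRestrict {n : ℕ} (p : MvPolynomial (Fin n) ℝ) (lam : ℝ) (x : Fin n → ℝ) :
    MvPolynomial (Fin n) ℝ :=
  MvPolynomial.aeval (fun i => MvPolynomial.C (Real.sqrt (1 - lam) * x i)
    + MvPolynomial.C (Real.sqrt lam) * MvPolynomial.X i) p

/-- Hermite coefficient `q̂(α)` of a polynomial, via gaussian orthonormality. -/
noncomputable def hermCoeff {n : ℕ} (q : MvPolynomial (Fin n) ℝ) (α : Fin n →₀ ℕ) : ℝ :=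
  ∫ y, MvPolynomial.eval y q * hermMvFn α y ∂(gaussPi n)

/-- Normalized hypervariance `H_R(q) = (Σ_{α≠0} q̂(α)² R^{2|α|}) / q̂(0)²`. -/
noncomputable def hyperVar {n : ℕ} (R : ℝ) (q : MvPolynomial (Fin n) ℝ) : ℝ :=
  (∑' α : Fin n →₀ ℕ, if α = 0 then 0 else (hermCoeff q α) ^ 2 * R ^ (2 * wt α)) /
    (hermCoeff q 0) ^ 2

/-! The heart of the matter is the one-dimensional addition formula
`He_m(ρx + sy) = Σ_j C(m,j) ρ^(m-j) s^j He_(m-j)(x) He_j(y)` for `ρ² + s² = 1`.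
For any derivation `D` and element `u` with `D u = 1` one has `He_m(u) = (u - D)^m 1`.
Taking `u = ρx + sy` and `D = ρ∂_x + s∂_y`, the operator `u - D` is the sum of the commuting
operators `ρ(x - ∂_x)` and `s(y - ∂_y)`, whose powers applied to `1` are `ρ^j He_j(x)` and
`s^j He_j(y)`; the binomial theorem gives the formula. Since `∂^k He_m = m!/(m-k)! He_(m-k)`,
this is the one-dimensional case of the theorem. Taking products over the coordinates gives the
theorem for a single `h_β`, and the general case follows by linearity, because
`U_ρ h_β = ρ^|β| h_β`. -/

section HermiteOperator

open Polynomial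

variable {k A : Type*} [CommRing k] [CommRing A] [Algebra k A]

theorem pow_mulLeft_sub_apply_one (D : Derivation k A A) {u : A} (hu : D u = 1) (m : ℕ) :
    ((LinearMap.mulLeft k u - D.toLinearMap) ^ m) 1 =
      aeval u ((hermite m).map (Int.castRingHom k)) := by
  induction m with
  | zero => simp
  | succ m ih =>
    rw [pow_succ', Module.End.mul_apply, ih, hermite_succ]
    simp [Derivation.map_aeval, hu, ← derivative_map]

theorem pow_mulLeft_sub_apply_mul (D : Derivation k A A) (u : A) {a : A} (ha : D a = 0)
    (b : A) (m : ℕ) :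
    ((LinearMap.mulLeft k u - D.toLinearMap) ^ m) (a * b) =
      a * ((LinearMap.mulLeft k u - D.toLinearMap) ^ m) b := by
  induction m with
  | zero => simp
  | succ m ih =>
    rw [pow_succ', Module.End.mul_apply, ih]
    simp only [LinearMap.sub_apply, LinearMap.mulLeft_apply, Derivation.coeFn_coe,
      Derivation.leibniz, smul_eq_mul, ha, mul_zero, add_zero, Module.End.mul_apply]
    ring

theorem aeval_hermite_add (D₁ D₂ : Derivation k A A) (hD : ∀ a, D₁ (D₂ a) = D₂ (D₁ a))
    {u₁ u₂ : A} (h₁ : D₁ u₁ = 1) (h₂ : D₂ u₂ = 1) (h₁₂ : D₁ u₂ = 0) (h₂₁ : D₂ u₁ = 0)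
    {ρ s : k} (h : ρ ^ 2 + s ^ 2 = 1) (m : ℕ) :
    aeval (ρ • u₁ + s • u₂) ((hermite m).map (Int.castRingHom k)) =
      ∑ j ∈ Finset.range (m + 1), ((m.choose j : k) * ρ ^ (m - j) * s ^ j) •
        (aeval u₁ ((hermite (m - j)).map (Int.castRingHom k)) *
          aeval u₂ ((hermite j).map (Int.castRingHom k))) := by
  set T₁ := LinearMap.mulLeft k u₁ - D₁.toLinearMap
  set T₂ := LinearMap.mulLeft k u₂ - D₂.toLinearMap
  have hT : LinearMap.mulLeft k (ρ • u₁ + s • u₂) - (ρ • D₁ + s • D₂).toLinearMap =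
      s • T₂ + ρ • T₁ := by
    ext a
    simp only [Derivation.coe_add_linearMap, Derivation.coe_smul_linearMap, LinearMap.sub_apply,
      LinearMap.mulLeft_apply, add_mul, Algebra.smul_mul_assoc, LinearMap.add_apply,
      LinearMap.smul_apply, Derivation.coeFn_coe, smul_sub, T₂, T₁]
    abel
  have hcomm : Commute (s • T₂) (ρ • T₁) := by
    refine (Commute.smul_left ?_ _).smul_right _
    ext a
    simp only [Module.End.mul_apply, LinearMap.sub_apply, LinearMap.mulLeft_apply,
      Derivation.coeFn_coe, map_sub, Derivation.leibniz, smul_eq_mul, h₂₁, h₁₂, hD, mul_zero,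
      add_zero, T₂, T₁]
    ring
  have hu : (ρ • D₁ + s • D₂) (ρ • u₁ + s • u₂) = 1 := by
    simp [h₁, h₂, h₁₂, h₂₁, smul_smul, ← sq, ← add_smul, h]
  have hker (i : ℕ) : D₂ (aeval u₁ ((hermite i).map (Int.castRingHom k))) = 0 := by
    simp [Derivation.map_aeval, h₂₁]
  rw [← pow_mulLeft_sub_apply_one _ hu, hT, hcomm.add_pow, LinearMap.sum_apply]
  refine Finset.sum_congr rfl fun j _ => ?_
  rw [Module.End.mul_apply, Module.End.mul_apply, Module.End.natCast_apply, _root_.smul_pow,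
    _root_.smul_pow]
  simp only [LinearMap.smul_apply, map_nsmul, map_smul]
  rw [pow_mulLeft_sub_apply_one _ h₁, ← mul_one (aeval u₁ _),
    pow_mulLeft_sub_apply_mul _ _ (hker _), pow_mulLeft_sub_apply_one _ h₂, mul_one, mul_smul,
    mul_smul, Nat.cast_smul_eq_nsmul]

end HermiteOperator

section MvDerivative

open MvPolynomial

variable {σ R : Type*} [CommRing R]

theorem MvPolynomial.pderiv_comm (i j : σ) (p : MvPolynomial σ R) :
    pderiv i (pderiv j p) = pderiv j (pderiv i p) := by
  have h : ⁅(pderiv i : Derivation R (MvPolynomial σ R) (MvPolynomial σ R)), pderiv j⁆ = 0 :=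
    derivation_ext fun l => by
      change pderiv i (pderiv j (X l : MvPolynomial σ R)) - pderiv j (pderiv i (X l)) = 0
      classical simp [pderiv_X, Pi.single_apply, apply_ite]
  exact sub_eq_zero.mp (DFunLike.congr_fun h p)

theorem eval_aeval_X (p : Polynomial R) (x : σ → R) (j : σ) :
    eval x (Polynomial.aeval (X j) p) = p.eval (x j) := by
  change aeval x (Polynomial.aeval (X j) p) = _
  rw [← Polynomial.aeval_algHom_apply, aeval_X, Polynomial.coe_aeval_eq_eval]

variable [Fintype σ] [DecidableEq σ]

theorem pderiv_prod_aeval_X (i : σ) (q : σ → Polynomial R) :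
    pderiv i (∏ j, Polynomial.aeval (X j : MvPolynomial σ R) (q j)) =
      ∏ j, Polynomial.aeval (X j) (Function.update q i (Polynomial.derivative (q i)) j) := by
  have hrest : pderiv i (∏ j ∈ Finset.univ.erase i,
      Polynomial.aeval (X j : MvPolynomial σ R) (q j)) = 0 := by
    refine Finset.prod_induction _ (fun p => pderiv i p = 0) (fun a b ha hb => ?_) pderiv_one
      fun j hj => ?_
    · simp [ha, hb]
    · simp [Derivation.map_aeval, pderiv_X_of_ne (Finset.ne_of_mem_erase hj)]
  rw [← Finset.mul_prod_erase _ _ (Finset.mem_univ i),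
    ← Finset.mul_prod_erase _ _ (Finset.mem_univ i), Derivation.leibniz, hrest]
  simp only [smul_eq_mul, mul_zero, zero_add, Derivation.map_aeval, pderiv_X_self, mul_one,
    Function.update_self]
  rw [mul_comm]
  congr 1
  exact Finset.prod_congr rfl fun j hj => by rw [Function.update_of_ne (Finset.ne_of_mem_erase hj)]

theorem pderiv_pow_prod_aeval_X (i : σ) (m : ℕ) (q : σ → Polynomial R) :
    (((pderiv i).toLinearMap : Module.End R (MvPolynomial σ R)) ^ m)
        (∏ j, Polynomial.aeval (X j) (q j)) =
      ∏ j, Polynomial.aeval (X j) (Function.update q i (Polynomial.derivative^[m] (q i)) j) := by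
  induction m with
  | zero => simp
  | succ m ih =>
    rw [pow_succ', Module.End.mul_apply, ih]
    simp [pderiv_prod_aeval_X, Function.iterate_succ_apply']

theorem list_prod_map_pderiv_pow_apply (l : List σ) (k : σ → ℕ) (q : σ → Polynomial R) :
    (l.map fun i => ((pderiv i).toLinearMap : Module.End R (MvPolynomial σ R)) ^ k i).prod
        (∏ j, Polynomial.aeval (X j) (q j)) =
      ∏ j, Polynomial.aeval (X j) (Polynomial.derivative^[l.count j * k j] (q j)) := by
  induction l with
  | nil => simp
  | cons i l ih =>
    rw [List.map_cons, List.prod_cons, Module.End.mul_apply, ih, pderiv_pow_prod_aeval_X]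
    refine Finset.prod_congr rfl fun j _ => ?_
    rcases eq_or_ne j i with rfl | hji
    · rw [Function.update_self, ← Function.iterate_add_apply, List.count_cons_self, add_one_mul,
        add_comm]
    · simp [Function.update_of_ne hji, List.count_cons_of_ne hji.symm]

end MvDerivative

theorem mpderiv_prod_aeval_X {n : ℕ} (α : Fin n →₀ ℕ) (q : Fin n → Polynomial ℝ) :
    mpderiv α (∏ j, Polynomial.aeval (MvPolynomial.X j) (q j)) =
      ∏ j, Polynomial.aeval (MvPolynomial.X j) (Polynomial.derivative^[α j] (q j)) := by
  simp [mpderiv, List.ofFn_eq_map, list_prod_map_pderiv_pow_apply, List.count_finRange]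

section Univariate

open Polynomial

theorem hermite_eval_add {ρ s : ℝ} (h : ρ ^ 2 + s ^ 2 = 1) (x y : ℝ) (m : ℕ) :
    ((hermite m).map (Int.castRingHom ℝ)).eval (ρ * x + s * y) =
      ∑ j ∈ Finset.range (m + 1), m.choose j * ρ ^ (m - j) * s ^ j *
        ((hermite (m - j)).map (Int.castRingHom ℝ)).eval x *
          ((hermite j).map (Int.castRingHom ℝ)).eval y := by
  have hadd := aeval_hermite_add (MvPolynomial.pderiv (0 : Fin 2)) (MvPolynomial.pderiv 1)
    (MvPolynomial.pderiv_comm 0 1) (MvPolynomial.pderiv_X_self 0) (MvPolynomial.pderiv_X_self 1)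
    (MvPolynomial.pderiv_X_of_ne (R := ℝ) (by decide))
    (MvPolynomial.pderiv_X_of_ne (R := ℝ) (by decide)) h m
  replace hadd := congrArg (MvPolynomial.aeval ![x, y]) hadd
  simp only [← Polynomial.aeval_algHom_apply, map_sum, map_smul, map_mul] at hadd
  simpa [mul_assoc] using hadd

theorem derivative_hermite_succ (m : ℕ) :
    derivative (hermite (m + 1)) = (m + 1) • hermite m := by
  induction m with
  | zero => simp
  | succ m ih =>
    rw [hermite_succ (m + 1), derivative_sub, derivative_mul, ih, derivative_smul]
    simp only [derivative_X, nsmul_eq_mul]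
    push_cast
    linear_combination -((m : ℤ[X]) + 1) * hermite_succ m

theorem derivative_hermite (m : ℕ) : derivative (hermite m) = m • hermite (m - 1) := by
  cases m with
  | zero => simp
  | succ m => exact derivative_hermite_succ m

theorem iterate_derivative_hermite (m k : ℕ) :
    derivative^[k] (hermite m) = m.descFactorial k • hermite (m - k) := by
  induction k with
  | zero => simp
  | succ k ih =>
    rw [Function.iterate_succ_apply', ih, derivative_smul, derivative_hermite, smul_smul,
      Nat.descFactorial_succ, Nat.sub_sub, mul_comm]

theorem hermPoly_eval_add {ρ s : ℝ} (hρ : ρ ≠ 0) (h : ρ ^ 2 + s ^ 2 = 1) (x y : ℝ) (m : ℕ) :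
    (hermPoly m).eval (ρ * x + s * y) = ∑ k ∈ Finset.Iic m, ρ ^ m *
      (derivative^[k] (hermPoly m)).eval x / √(k.factorial : ℝ) * (s / ρ) ^ k * herm k y := by
  simp only [hermPoly, iterate_derivative_C_mul, iterate_derivative_map,
    iterate_derivative_hermite, nsmul_eq_mul, Polynomial.map_mul, Polynomial.map_natCast,
    eval_mul, eval_C, eval_natCast, herm, hermite_eval_add h, ← Nat.range_succ_eq_Iic,
    Finset.mul_sum]
  refine Finset.sum_congr rfl fun k hk => ?_
  have hkm : k ≤ m := Nat.lt_succ_iff.mp (Finset.mem_range.mp hk)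
  have hρm : ρ ^ m = ρ ^ (m - k) * ρ ^ k := by rw [← pow_add, Nat.sub_add_cancel hkm]
  rw [Nat.descFactorial_eq_factorial_mul_choose, hρm, div_pow]
  push_cast
  field_simp
  rw [Real.sq_sqrt (by positivity)]

theorem natDegree_hermPoly_le (m : ℕ) : (hermPoly m).natDegree ≤ m :=
  (natDegree_C_mul_le _ _).trans <| natDegree_map_le.trans natDegree_hermite.le

end Univariate

theorem Real.sqrt_pow {a : ℝ} (ha : 0 ≤ a) (m : ℕ) : √(a ^ m) = √a ^ m := by
  rw [← Real.sqrt_sq (pow_nonneg (Real.sqrt_nonneg a) m), ← pow_mul, mul_comm, pow_mul,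
    Real.sq_sqrt ha]

theorem Finset.sum_Iic_prod_eq_prod_sum {ι M : Type*} [Fintype ι] [DecidableEq ι]
    [CommSemiring M] (β : ι →₀ ℕ) (f : ι → ℕ → M) :
    ∑ α ∈ Iic β, ∏ i, f i (α i) = ∏ i, ∑ k ∈ Iic (β i), f i k := by
  rw [prod_univ_sum]
  exact sum_equiv Finsupp.equivFunOnFinite (by simp [Finsupp.le_def]) (by simp)

theorem wt_eq_sum {n : ℕ} (α : Fin n →₀ ℕ) : wt α = ∑ i, α i :=
  Finsupp.sum_fintype α _ fun _ => rfl

theorem fact_eq_prod {n : ℕ} (α : Fin n →₀ ℕ) : fact α = ∏ i, (α i).factorial :=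
  Finsupp.prod_fintype α _ fun _ => rfl

open Polynomial in
theorem hermMvPoly_eval_add {n : ℕ} {ρ s : ℝ} (hρ : ρ ≠ 0) (h : ρ ^ 2 + s ^ 2 = 1)
    (β : Fin n →₀ ℕ) {S : Finset (Fin n →₀ ℕ)} (hS : Finset.Iic β ⊆ S) (x y : Fin n → ℝ) :
    MvPolynomial.eval (fun i => ρ * x i + s * y i) (hermMvPoly β) = ∑ α ∈ S,
      ρ ^ wt β * MvPolynomial.eval x (mpderiv α (hermMvPoly β)) / √(fact α) * (s / ρ) ^ wt α *
        hermMvFn α y := by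
  have hderiv (α : Fin n →₀ ℕ) : MvPolynomial.eval x (mpderiv α (hermMvPoly β)) =
      ∏ i, (derivative^[α i] (hermPoly (β i))).eval (x i) := by
    simp only [hermMvPoly, mpderiv_prod_aeval_X, map_prod, eval_aeval_X]
  calc MvPolynomial.eval (fun i => ρ * x i + s * y i) (hermMvPoly β)
      = ∏ i, (hermPoly (β i)).eval (ρ * x i + s * y i) := by
        simp only [hermMvPoly, map_prod, eval_aeval_X]
    _ = ∏ i, ∑ k ∈ Finset.Iic (β i), ρ ^ β i * (derivative^[k] (hermPoly (β i))).eval (x i) /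
          √(k.factorial : ℝ) * (s / ρ) ^ k * herm k (y i) := by
        simp only [hermPoly_eval_add hρ h]
    _ = _ := by
      rw [← Finset.sum_subset hS, ← Finset.sum_Iic_prod_eq_prod_sum]
      · refine Finset.sum_congr rfl fun α _ => ?_
        simp only [hderiv, hermMvFn, wt_eq_sum, fact_eq_prod, Finset.prod_mul_distrib,
          Finset.prod_div_distrib, Finset.prod_pow_eq_pow_sum, Nat.cast_prod]
        rw [Real.sqrt_prod _ fun i _ => by positivity]
      · intro α _ hα
        obtain ⟨i, hi⟩ : ∃ i, β i < α i := by simpa [Finsupp.le_def] using hα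
        rw [hderiv, Finset.prod_eq_zero (Finset.mem_univ i)]
        · simp
        · rw [iterate_derivative_eq_zero ((natDegree_hermPoly_le _).trans_lt hi), eval_zero]

/-- Hermite-basis analogue of the Taylor expansion:
`f(√(1-λ)x + √λ y) = Σ_α (∂^α g(x)/√(α!)) (λ/(1-λ))^{|α|/2} h_α(y)` with `g = U_{√(1-λ)} f`. -/
theorem hermite_taylor_expansion (n : ℕ) (lam : ℝ) (h1 : 0 < lam) (h2 : lam < 1)
    (A : Finset (Fin n →₀ ℕ)) (c : (Fin n →₀ ℕ) → ℝ)
    (F G : MvPolynomial (Fin n) ℝ)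
    (hF : F = ∑ α ∈ A, c α • hermMvPoly α)
    (hG : G = ∑ α ∈ A, (c α * Real.sqrt ((1 - lam) ^ (wt α))) • hermMvPoly α)
    (x y : Fin n → ℝ) :
    MvPolynomial.eval (fun i => Real.sqrt (1 - lam) * x i + Real.sqrt lam * y i) F
      = ∑ α ∈ A.biUnion (fun β => Finset.Iic β),
          (MvPolynomial.eval x (mpderiv α G) / Real.sqrt (fact α))
            * Real.sqrt ((lam / (1 - lam)) ^ (wt α)) * hermMvFn α y := by
  have hρ : √(1 - lam) ≠ 0 := (Real.sqrt_pos.mpr (by linarith)).ne'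
  have h : √(1 - lam) ^ 2 + √lam ^ 2 = 1 := by
    rw [Real.sq_sqrt (by linarith), Real.sq_sqrt h1.le]; ring
  have hG' (α : Fin n →₀ ℕ) : MvPolynomial.eval x (mpderiv α G) = ∑ β ∈ A,
      c β * (√(1 - lam) ^ wt β * MvPolynomial.eval x (mpderiv α (hermMvPoly β))) := by
    simp only [hG, mpderiv, map_sum, map_smul, MvPolynomial.smul_eval, mul_assoc,
      Real.sqrt_pow (a := 1 - lam) (by linarith)]
  simp only [hF, hG', map_sum, MvPolynomial.smul_eval, Finset.sum_div, Finset.sum_mul,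
    Real.sqrt_pow (div_nonneg h1.le (sub_pos.mpr h2).le), Real.sqrt_div h1.le]
  rw [Finset.sum_comm]
  refine Finset.sum_congr rfl fun β hβ => ?_
  rw [hermMvPoly_eval_add hρ h β (Finset.subset_biUnion_of_mem _ hβ), Finset.mul_sum]
  refine Finset.sum_congr rfl fun α _ => ?_
  ring
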